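/- arXiv:1812.05183 — 2 statements merged into one kernel-verified Lean document; each statement's English description precedes it below -/
import Mathlib

section
/- Let f(t) = ∫_t^∞ (e^{-x}/x) dx be the exponential integral for t > 0. Then f(t) = -log(t) - γ - ∫_0^t ((e^{-x}-1)/x) dx, where γ is the Euler–Mascheroni constant. -/
/-!
Both sides come from `∫₀^∞ log x · e^{-x} dx = Γ'(1) = -γ`, split at `t` and integrated by
parts. On `(t, ∞)` take `-e^{-x}` as antiderivative of `e^{-x}`; on `(0, t]` take `1 - e^{-x}`,
which vanishes at `0` to first order and so absorbs the logarithmic singularity. The boundary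
terms `e^{-t} log t` and `(1 - e^{-t}) log t` add up to `log t`.
-/

open MeasureTheory Real Set Filter Topology

lemma one_sub_exp_neg_mem_Icc {x : ℝ} (hx : 0 ≤ x) : 1 - exp (-x) ∈ Icc 0 x :=
  ⟨sub_nonneg.2 (exp_le_one_iff.2 (neg_nonpos.2 hx)), by linarith [one_sub_le_exp_neg x]⟩

lemma norm_exp_neg_sub_one_div_le_one {x : ℝ} (hx : 0 ≤ x) : ‖(exp (-x) - 1) / x‖ ≤ 1 := by
  obtain ⟨h0, h1⟩ := one_sub_exp_neg_mem_Icc hx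
  rw [norm_div, norm_sub_rev, Real.norm_of_nonneg h0, Real.norm_of_nonneg hx]
  exact div_le_one_of_le₀ h1 hx

lemma intervalIntegrable_exp_neg_sub_one_div {t : ℝ} (ht : 0 ≤ t) :
    IntervalIntegrable (fun x => (exp (-x) - 1) / x) volume 0 t := by
  rw [intervalIntegrable_iff_integrableOn_Ioc_of_le ht]
  refine Measure.integrableOn_of_bounded (M := 1) measure_Ioc_lt_top.ne
    (by fun_prop : Measurable fun x : ℝ => (exp (-x) - 1) / x).aestronglyMeasurable ?_
  filter_upwards [ae_restrict_mem measurableSet_Ioc] with x hx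
  exact norm_exp_neg_sub_one_div_le_one hx.1.le

lemma integrableOn_exp_neg_div_Ioi {t : ℝ} (ht : 0 < t) :
    IntegrableOn (fun x => exp (-x) / x) (Ioi t) := by
  have hdom := (exp_neg_integrableOn_Ioi t one_pos).mul_const t⁻¹
  simp only [neg_mul, one_mul] at hdom
  refine hdom.mono' (by fun_prop : Measurable fun x : ℝ => exp (-x) / x).aestronglyMeasurable ?_
  filter_upwards [ae_restrict_mem measurableSet_Ioi] with x (hx : t < x)
  rw [Real.norm_of_nonneg (by positivity [ht.trans hx]), div_eq_mul_inv]
  gcongr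

lemma integrableOn_log_mul_exp_neg : IntegrableOn (fun x => log x * exp (-x)) (Ioi 0) := by
  rw [← Ioc_union_Ioi_eq_Ioi zero_le_one, integrableOn_union]
  constructor
  · exact (intervalIntegral.intervalIntegrable_log'.mul_continuousOn (by fun_prop)).1
  · have hdom : IntegrableOn (fun x => exp (-x) * x ^ ((2 : ℝ) - 1)) (Ioi 1) :=
      (GammaIntegral_convergent two_pos).mono_set (Ioi_subset_Ioi zero_le_one)
    refine hdom.integrable.mono' (by fun_prop) ?_
    filter_upwards [ae_restrict_mem measurableSet_Ioi] with x (hx : 1 < x)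
    rw [norm_mul, Real.norm_of_nonneg (log_nonneg hx.le), Real.norm_of_nonneg (exp_pos _).le,
      show (2 : ℝ) - 1 = 1 by norm_num, rpow_one, mul_comm]
    gcongr
    linarith [log_le_sub_one_of_pos (zero_lt_one.trans hx)]

lemma integral_log_mul_exp_neg_eq_neg_eulerMascheroni :
    ∫ x in Ioi 0, log x * exp (-x) = -eulerMascheroniConstant := by
  have hGamma : HasDerivAt Complex.Gamma
      (∫ x : ℝ in Ioi 0, (x : ℂ) ^ ((1 : ℂ) - 1) * (log x * exp (-x))) 1 := by
    refine (Complex.hasDerivAt_GammaIntegral (by simp)).congr_of_eventuallyEq ?_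
    filter_upwards [(Complex.continuous_re.isOpen_preimage _ isOpen_Ioi).mem_nhds
      (by simp : (1 : ℂ) ∈ Complex.re ⁻¹' Ioi 0)] with s hs
    exact Complex.Gamma_eq_integral hs
  have := hGamma.unique Complex.hasDerivAt_Gamma_one
  simp only [sub_self, Complex.cpow_zero, one_mul, ← Complex.ofReal_mul] at this
  exact_mod_cast this

lemma tendsto_log_mul_exp_neg_atTop : Tendsto (fun x => log x * exp (-x)) atTop (𝓝 0) := by
  refine squeeze_zero_norm' ?_ (by simpa using tendsto_pow_mul_exp_neg_atTop_nhds_zero 1)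
  filter_upwards [eventually_ge_atTop 1] with x hx
  rw [norm_mul, Real.norm_of_nonneg (log_nonneg hx), Real.norm_of_nonneg (exp_pos _).le]
  gcongr
  linarith [log_le_sub_one_of_pos (zero_lt_one.trans_le hx)]

lemma integral_Ioi_log_mul_exp_neg {t : ℝ} (ht : 0 < t) :
    ∫ x in Ioi t, log x * exp (-x) = exp (-t) * log t + ∫ x in Ioi t, exp (-x) / x := by
  have hibp := integral_Ioi_mul_deriv_eq_deriv_mul (u := log) (v := fun x => -exp (-x))
    (u' := fun x => x⁻¹) (v' := fun x => exp (-x)) (a' := log t * -exp (-t)) (b' := 0)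
    (fun x (hx : t < x) => hasDerivAt_log (ht.trans hx).ne')
    (fun x _ => by simpa using ((hasDerivAt_neg x).exp).fun_neg)
    (integrableOn_log_mul_exp_neg.mono_set (Ioi_subset_Ioi ht.le))
    (by simpa only [Pi.mul_def, mul_neg, div_eq_inv_mul] using
      (integrableOn_exp_neg_div_Ioi ht).fun_neg)
    (((continuousAt_log ht.ne').mul (by fun_prop)).tendsto.mono_left nhdsWithin_le_nhds)
    (by simpa only [Pi.mul_def, mul_neg, neg_zero] using tendsto_log_mul_exp_neg_atTop.neg)
  rw [hibp]
  simp only [mul_neg, integral_neg, div_eq_inv_mul]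
  ring

lemma continuousWithinAt_log_mul_one_sub_exp_neg :
    ContinuousWithinAt (fun x => log x * (1 - exp (-x))) (Ici 0) 0 := by
  rw [ContinuousWithinAt, log_zero, zero_mul]
  have hmul_log : Tendsto (fun x => x * log x) (𝓝[Ici 0] 0) (𝓝 0) := by
    simpa using (continuous_mul_log.tendsto 0).mono_left nhdsWithin_le_nhds
  refine squeeze_zero_norm' ?_ (by simpa using hmul_log.norm)
  filter_upwards [self_mem_nhdsWithin] with x (hx : 0 ≤ x)
  obtain ⟨h0, h1⟩ := one_sub_exp_neg_mem_Icc hx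
  rw [norm_mul, Real.norm_of_nonneg h0, Real.norm_eq_abs, abs_of_nonneg hx, mul_comm]
  gcongr

lemma intervalIntegral_log_mul_exp_neg {t : ℝ} (ht : 0 ≤ t) :
    ∫ x in 0..t, log x * exp (-x) = log t * (1 - exp (-t)) + ∫ x in 0..t, (exp (-x) - 1) / x := by
  have hcont : ContinuousOn (fun x => log x * (1 - exp (-x))) (Icc 0 t) := by
    intro x hx
    rcases hx.1.eq_or_lt with rfl | hx0
    · exact continuousWithinAt_log_mul_one_sub_exp_neg.mono Icc_subset_Ici_self
    · exact ((continuousAt_log hx0.ne').mul (by fun_prop)).continuousWithinAt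
  have hderiv : ∀ x ∈ Ioo 0 t, HasDerivAt (fun x => log x * (1 - exp (-x)))
      (log x * exp (-x) - (exp (-x) - 1) / x) x := by
    intro x hx
    refine ((hasDerivAt_log hx.1.ne').fun_mul
      (((hasDerivAt_neg x).exp).const_sub 1)).congr_deriv ?_
    rw [div_eq_inv_mul]
    ring
  have hlog_exp : IntervalIntegrable (fun x => log x * exp (-x)) volume 0 t :=
    intervalIntegral.intervalIntegrable_log'.mul_continuousOn (by fun_prop)
  have hftc := intervalIntegral.integral_eq_sub_of_hasDerivAt_of_le ht hcont hderiv
    (hlog_exp.sub (intervalIntegrable_exp_neg_sub_one_div ht))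
  rw [intervalIntegral.integral_sub hlog_exp (intervalIntegrable_exp_neg_sub_one_div ht)] at hftc
  simp only [log_zero, zero_mul, sub_zero] at hftc
  linarith

/-- The exponential integral `f(t) = ∫_t^∞ e^{-x}/x dx` satisfies
`f(t) = -log t - γ - ∫_0^t (e^{-x}-1)/x dx` for `t > 0`. -/
theorem expIntegral_eq_neg_log_sub_eulerMascheroni (t : ℝ) (ht : 0 < t) :
    (∫ x in Set.Ioi t, Real.exp (-x) / x) =
      -Real.log t - Real.eulerMascheroniConstant -
        ∫ x in (0:ℝ)..t, (Real.exp (-x) - 1) / x := by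
  have hsplit : ∫ x in Ioi 0, log x * exp (-x)
      = (∫ x in 0..t, log x * exp (-x)) + ∫ x in Ioi t, log x * exp (-x) := by
    rw [intervalIntegral.integral_of_le ht.le, ← setIntegral_union (Ioc_disjoint_Ioi le_rfl)
      measurableSet_Ioi (integrableOn_log_mul_exp_neg.mono_set Ioc_subset_Ioi_self)
      (integrableOn_log_mul_exp_neg.mono_set (Ioi_subset_Ioi ht.le)),
      Ioc_union_Ioi_eq_Ioi ht.le]
  rw [integral_log_mul_exp_neg_eq_neg_eulerMascheroni, intervalIntegral_log_mul_exp_neg ht.le,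
    integral_Ioi_log_mul_exp_neg ht] at hsplit
  linarith
end

section
/- The function t ↦ f(t) + log(t), where f(t) = ∫_t^∞ (e^{-x}/x) dx, extends to a smooth (infinitely differentiable) function on [0, ∞). -/
set_option maxHeartbeats 1000000

open MeasureTheory Real

/-- The smooth extension of `x ↦ (exp (-x) - 1) / x`. -/
noncomputable def auxH : ℝ → ℝ := dslope (fun x => Real.exp (-x)) 0

lemma auxH_eq {x : ℝ} (hx : x ≠ 0) : auxH x = (Real.exp (-x) - 1) / x := by
  rw [auxH, dslope_of_ne _ hx, slope_def_field]
  simp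

lemma aux_hasDerivAt_exp_neg : HasDerivAt (fun x : ℝ => Real.exp (-x)) (-1) 0 := by
  have := (Real.hasDerivAt_exp (-0)).comp 0 ((hasDerivAt_id (0:ℝ)).neg)
  have h2 : HasDerivAt (Real.exp ∘ Neg.neg) (-1) (0:ℝ) := by simpa using this
  exact h2

lemma auxH_zero : auxH 0 = -1 := by
  rw [auxH, dslope_same]
  exact aux_hasDerivAt_exp_neg.deriv

lemma auxH_continuous : Continuous auxH := by
  rw [continuous_iff_continuousAt]
  intro x
  rcases eq_or_ne x 0 with rfl | hx
  · exact continuousAt_dslope_same.2 aux_hasDerivAt_exp_neg.differentiableAt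
  · have hc : ContinuousAt (fun y : ℝ => (Real.exp (-y) - 1) / y) x :=
      (((Real.continuous_exp.comp continuous_neg).sub continuous_const).continuousAt).div
        continuousAt_id hx
    apply hc.congr
    filter_upwards [isOpen_ne.mem_nhds hx] with y hy
    exact (auxH_eq hy).symm

/-- Coefficients of the power series of the primitive of `auxH`. -/
noncomputable def auxc : ℕ → ℝ :=
  fun n => if n = 0 then 0 else (-1) ^ n / ((n : ℝ) * n.factorial)

lemma auxc_norm (n : ℕ) : ‖auxc n‖ ≤ 1 / n.factorial := by
  rcases eq_or_ne n 0 with rfl | hn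
  · simp [auxc]
  · have hn1 : 1 ≤ (n : ℝ) := by exact_mod_cast Nat.one_le_iff_ne_zero.2 hn
    have hfac : (0:ℝ) < (n.factorial : ℝ) := by exact_mod_cast n.factorial_pos
    rw [auxc, if_neg hn, norm_div, norm_pow, norm_neg, norm_one, one_pow,
      Real.norm_eq_abs, abs_of_pos (by positivity)]
    rw [div_le_div_iff₀ (by positivity) hfac, one_mul, one_mul]
    nlinarith

lemma auxS_summable (y : ℝ) : Summable (fun n => auxc n * y ^ n) := by
  apply Summable.of_norm_bounded (g := fun n => |y| ^ n / n.factorial)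
    (Real.summable_pow_div_factorial |y|)
  intro n
  rw [norm_mul, norm_pow]
  calc ‖auxc n‖ * ‖y‖ ^ n ≤ (1 / n.factorial) * ‖y‖ ^ n :=
        mul_le_mul_of_nonneg_right (auxc_norm n) (by positivity)
    _ = ‖y‖ ^ n / n.factorial := by ring
    _ = |y| ^ n / n.factorial := by rw [Real.norm_eq_abs]

/-- The primitive of `auxH` as a power series sum. -/
noncomputable def auxS : ℝ → ℝ := fun y => ∑' n, auxc n * y ^ n

lemma auxS_hasSum (y : ℝ) : HasSum (fun n => auxc n * y ^ n) (auxS y) :=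
  (auxS_summable y).hasSum

lemma auxS_hasFPS :
    HasFPowerSeriesOnBall auxS (FormalMultilinearSeries.ofScalars ℝ auxc) 0 ⊤ := by
  refine ⟨le_of_eq (FormalMultilinearSeries.radius_eq_top_of_summable_norm _
      fun r => ?_).symm, ENNReal.zero_lt_top, fun hy => ?_⟩
  · apply Summable.of_nonneg_of_le (fun n => by positivity) (fun n => ?_)
      (Real.summable_pow_div_factorial r)
    rw [FormalMultilinearSeries.ofScalars_norm]
    calc ‖auxc n‖ * (r:ℝ) ^ n ≤ (1 / n.factorial) * (r:ℝ) ^ n :=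
          mul_le_mul_of_nonneg_right (auxc_norm n) (by positivity)
      _ = (r:ℝ) ^ n / n.factorial := by ring
  · simpa only [FormalMultilinearSeries.ofScalars_apply_eq, smul_eq_mul, zero_add]
      using auxS_hasSum _

lemma auxS_analytic : AnalyticOnNhd ℝ auxS Set.univ := fun t _ =>
  auxS_hasFPS.analyticAt_of_mem (EMetric.mem_ball.2 (edist_lt_top _ _))

lemma auxS_hasDerivAt (t : ℝ) : HasDerivAt auxS (auxH t) t := by
  set R : ℝ := |t| + 1 with hR
  have hR1 : 1 ≤ R := by
    have := abs_nonneg t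
    rw [hR]; linarith
  have key : HasDerivAt (fun z => ∑' n, auxc n * z ^ n)
      (∑' n, auxc n * (n * t ^ (n - 1))) t := by
    apply hasDerivAt_tsum_of_isPreconnected (u := fun n => R ^ n / n.factorial)
      (Real.summable_pow_div_factorial R) Metric.isOpen_ball
      ((convex_ball (0:ℝ) R).isPreconnected)
      (fun n y _ => (hasDerivAt_pow n y).const_mul (auxc n))
      (fun n y hy => ?_) (y₀ := 0)
      (Metric.mem_ball_self (by positivity)) (auxS_summable 0)
      (by rw [Metric.mem_ball, Real.dist_eq, sub_zero, hR]; linarith [abs_nonneg t])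
    -- the bound
    rcases eq_or_ne n 0 with rfl | hn
    · simp [auxc]
    · obtain ⟨m, rfl⟩ := Nat.exists_eq_succ_of_ne_zero hn
      have hyR : |y| ≤ R := by
        rw [Metric.mem_ball, Real.dist_eq, sub_zero] at hy
        exact hy.le
      have hfac : (0:ℝ) < ((m+1).factorial : ℝ) := by
        exact_mod_cast (m+1).factorial_pos
      have hne : ((m+1 : ℕ) : ℝ) ≠ 0 := by positivity
      have hval : auxc (m+1) * ((m+1 : ℕ) * y ^ ((m+1) - 1))
          = (-1) ^ (m+1) * y ^ m / (m+1).factorial := by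
        rw [auxc, if_neg (Nat.succ_ne_zero m)]
        simp only [Nat.add_sub_cancel]
        field_simp
        try ring
      rw [hval, Real.norm_eq_abs, abs_div, abs_mul, abs_pow, abs_pow, abs_neg,
        abs_one, one_pow, one_mul, abs_of_pos hfac]
      have hRm : (0:ℝ) ≤ R ^ m := pow_nonneg (le_trans zero_le_one hR1) m
      have h1 : |y| ^ m ≤ R ^ m := pow_le_pow_left₀ (abs_nonneg y) hyR m
      have h2 : R ^ m ≤ R ^ (m+1) := by
        rw [pow_succ]
        nlinarith
      have h3 : |y| ^ m ≤ R ^ (m+1) := h1.trans h2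
      exact div_le_div_of_nonneg_right h3 hfac.le |>.trans_eq rfl
  have heq : (∑' n, auxc n * (n * t ^ (n - 1))) = auxH t := by
    rcases eq_or_ne t 0 with rfl | ht
    · have hts : (∑' n, auxc n * ((n:ℝ) * (0:ℝ) ^ (n - 1))) = -1 := by
        rw [tsum_eq_single 1]
        · norm_num [auxc]
        · intro n hn
          rcases eq_or_ne n 0 with rfl | h0
          · simp [auxc]
          · obtain ⟨m, rfl⟩ := Nat.exists_eq_succ_of_ne_zero h0
            have hm : m ≠ 0 := fun h => hn (by simp [h])
            simp [zero_pow hm]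
      rw [hts, auxH_zero]
    · have h1 : HasSum (fun n => (-t) ^ n / n.factorial) (Real.exp (-t)) := by
        have := NormedSpace.expSeries_div_hasSum_exp (-t)
        rwa [← Real.exp_eq_exp_ℝ] at this
      have h2 : HasSum (fun n => (-t) ^ (n+1) / (n+1).factorial)
          (Real.exp (-t) - ∑ i ∈ Finset.range 1, (-t) ^ i / i.factorial) :=
        (hasSum_nat_add_iff' 1).mpr h1
      simp only [Finset.range_one, Finset.sum_singleton, pow_zero, Nat.factorial_zero,
        Nat.cast_one, div_one] at h2
      have h3 := h2.mul_left t⁻¹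
      have h4 : (fun n => t⁻¹ * ((-t) ^ (n+1) / (n+1).factorial))
          = fun n => auxc (n+1) * (((n+1 : ℕ) : ℝ) * t ^ ((n+1) - 1)) := by
        funext n
        have hfac : ((n+1).factorial : ℝ) ≠ 0 := by
          exact_mod_cast (n+1).factorial_ne_zero
        have hn1 : ((n+1 : ℕ) : ℝ) ≠ 0 := by positivity
        rw [auxc, if_neg (Nat.succ_ne_zero n), neg_pow]
        simp only [Nat.add_sub_cancel]
        field_simp
        try ring
      rw [h4] at h3
      have h5 : HasSum (fun n => auxc n * (n * t ^ (n - 1))) (t⁻¹ * (Real.exp (-t) - 1)) := by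
        apply (hasSum_nat_add_iff' 1).mp
        simp only [Finset.range_one, Finset.sum_singleton, Nat.cast_zero, zero_mul,
          mul_zero, sub_zero]
        exact h3
      rw [h5.tsum_eq, auxH_eq ht, div_eq_inv_mul]
  rw [← heq]
  exact key

lemma aux_integrableOn {t : ℝ} (ht : 0 < t) :
    IntegrableOn (fun x => Real.exp (-x) / x) (Set.Ioi t) := by
  have h1 : IntegrableOn (fun x : ℝ => Real.exp (-x)) (Set.Ioi t) := by
    simpa using exp_neg_integrableOn_Ioi t one_pos
  refine Integrable.mono' (h1.const_mul t⁻¹) ?_ ?_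
  · apply ContinuousOn.aestronglyMeasurable ?_ measurableSet_Ioi
    apply ContinuousOn.div (Real.continuous_exp.comp continuous_neg).continuousOn
      continuousOn_id
    intro x hx
    exact ne_of_gt (ht.trans hx)
  · rw [ae_restrict_iff' measurableSet_Ioi]
    filter_upwards with x hx
    have hxpos : 0 < x := ht.trans hx
    rw [Real.norm_eq_abs, abs_div, abs_of_pos (Real.exp_pos _), abs_of_pos hxpos]
    rw [div_le_iff₀ hxpos, mul_comm t⁻¹, mul_assoc]
    nth_rewrite 1 [← mul_one (Real.exp (-x))]
    gcongr
    rw [inv_mul_eq_div, le_div_iff₀ ht, one_mul]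
    exact le_of_lt hx

lemma aux_split {a b : ℝ} (ha : 0 < a) (hab : a ≤ b) :
    ∫ x in Set.Ioi a, Real.exp (-x) / x =
      (∫ x in a..b, Real.exp (-x) / x) + ∫ x in Set.Ioi b, Real.exp (-x) / x := by
  rw [intervalIntegral.integral_of_le hab, ← Set.Ioc_union_Ioi_eq_Ioi hab,
    setIntegral_union (Set.Ioc_disjoint_Ioi le_rfl) measurableSet_Ioi
      ((aux_integrableOn ha).mono_set Set.Ioc_subset_Ioi_self)
      (aux_integrableOn (ha.trans_le hab))]

/-- The function `t ↦ f(t) + log t`, where `f(t) = ∫_t^∞ e^{-x}/x dx` is the exponential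
integral, extends to a smooth (infinitely differentiable) function on `[0, ∞)`. -/
theorem expIntegral_add_log_extends_smooth :
    ∃ g : ℝ → ℝ, ContDiffOn ℝ (⊤ : ℕ∞) g (Set.Ici (0:ℝ)) ∧
      ∀ t : ℝ, 0 < t → g t = (∫ x in Set.Ioi t, Real.exp (-x) / x) + Real.log t := by
  set C : ℝ := ∫ x in Set.Ioi (1:ℝ), Real.exp (-x) / x with hC
  refine ⟨fun t => C + (auxS 1 - auxS t), ?_, ?_⟩
  · -- smoothness (indeed analyticity)
    have hS : ContDiff ℝ (⊤ : ℕ∞) auxS := auxS_analytic.contDiff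
    exact (contDiff_const.add (contDiff_const.sub hS)).contDiffOn
  · -- agreement for t > 0
    intro t ht
    have hne : ∀ x ∈ Set.uIcc t 1, x ≠ 0 := by
      intro x hx
      have h1 : min t 1 ≤ x := hx.1
      have h0 : (0:ℝ) < min t 1 := lt_min ht one_pos
      exact ne_of_gt (h0.trans_le h1)
    have hInt1 : IntervalIntegrable (fun x => Real.exp (-x) / x) volume t 1 := by
      apply ContinuousOn.intervalIntegrable
      apply ContinuousOn.div (Real.continuous_exp.comp continuous_neg).continuousOn
        continuousOn_id hne
    have hInt2 : IntervalIntegrable (fun x : ℝ => 1 / x) volume t 1 := by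
      apply ContinuousOn.intervalIntegrable
      exact ContinuousOn.div continuousOn_const continuousOn_id hne
    have key : ∫ x in Set.Ioi t, Real.exp (-x) / x
        = C + ∫ x in t..1, Real.exp (-x) / x := by
      rcases le_total t 1 with h | h
      · rw [aux_split ht h, add_comm]
      · have h2 := aux_split one_pos h
        rw [hC, h2, intervalIntegral.integral_symm]
        ring
    have hlog : ∫ x in t..1, (1:ℝ) / x = - Real.log t := by
      rw [integral_one_div]
      · rw [one_div, Real.log_inv]
      · intro h0
        exact hne 0 h0 rfl
    have hH : ∫ x in t..1, auxH x
        = (∫ x in t..1, Real.exp (-x) / x) + Real.log t := by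
      have heq : ∫ x in t..1, auxH x
          = ∫ x in t..1, (Real.exp (-x) / x - 1 / x) := by
        apply intervalIntegral.integral_congr
        intro x hx
        rw [auxH_eq (hne x hx), sub_div]
      rw [heq, intervalIntegral.integral_sub hInt1 hInt2, hlog]
      ring
    have hFTC : ∫ x in t..1, auxH x = auxS 1 - auxS t :=
      intervalIntegral.integral_eq_sub_of_hasDerivAt
        (fun x _ => auxS_hasDerivAt x) (auxH_continuous.intervalIntegrable t 1)
    show C + (auxS 1 - auxS t) = _
    rw [key, ← hFTC, hH]
    ring
end
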